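/- Let f : X → ℝ be a filter on a Lefschetz complex with n = |BD(f)| birth-death pairs, and let Ω : {1,…,n} → BD(f) be the bijection that orders the birth-death pairs by strictly increasing filter value of their death-giving cells. Then Ω is a shallow order of f. -/

import Mathlib

attribute [local instance] Classical.propDecidable

/-- A Lefschetz complex over an ambient finite type `C` of potential cells:
a finite set `cells` of cells, a dimension function, and a mod-2 incidence
function `bd` supported on `cells`, with `bd x y ≠ 0` only if
`dim y = dim x + 1`, and `∂∘∂ = 0` mod 2. -/
structure LC (C : Type) [Fintype C] [DecidableEq C] : Type where
  cells : Finset C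
  dim : C → ℤ
  bd : C → C → ZMod 2
  bd_mem : ∀ x y, bd x y ≠ 0 → x ∈ cells ∧ y ∈ cells
  bd_dim : ∀ x y, bd x y ≠ 0 → dim y = dim x + 1
  bd_sq : ∀ x z, ∑ y, bd x y * bd y z = 0

variable {C : Type} [Fintype C] [DecidableEq C]

/-- A filter on a Lefschetz complex: injective on the cells, and increasing
along the facet relation. -/
def IsFilter (L : LC C) (f : C → ℝ) : Prop :=
  (∀ x ∈ L.cells, ∀ y ∈ L.cells, f x = f y → x = y) ∧
  ∀ x y, L.bd x y ≠ 0 → f x < f y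

lemma LC.bd_self (L : LC C) (a : C) : L.bd a a = 0 := by
  by_contra h
  have := L.bd_dim a a h
  omega

/-- The boundary map of the quotient after canceling `(s,t)`:
`∂'(x,y) = ∂(x,y) + ∂(s,y)·∂(x,t)` on the remaining cells, `0` elsewhere. -/
def cancelBd (L : LC C) (s t : C) : C → C → ZMod 2 := fun x y =>
  if x ∈ L.cells \ {s, t} ∧ y ∈ L.cells \ {s, t} then
    L.bd x y + L.bd s y * L.bd x t
  else 0

private lemma zmod2_add_self : ∀ a : ZMod 2, a + a = 0 := by decide

/-- The quotient Lefschetz complex after canceling the facet-cofacet pair `(s,t)`. -/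
noncomputable def cancel (L : LC C) (s t : C) : LC C :=
  if hst : L.bd s t = 1 then
    { cells := L.cells \ {s, t}
      dim := L.dim
      bd := cancelBd L s t
      bd_mem := by
        intro x y h
        unfold cancelBd at h
        split_ifs at h with hc
        · exact hc
        · exact absurd rfl h
      bd_dim := by
        intro x y h
        unfold cancelBd at h
        split_ifs at h with hc
        · by_cases hxy : L.bd x y = 0
          · rw [hxy, zero_add] at h
            have h1 : L.bd s y ≠ 0 := fun hz => by simp [hz] at h
            have h2 : L.bd x t ≠ 0 := fun hz => by simp [hz] at h
            have d1 := L.bd_dim s y h1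
            have d2 := L.bd_dim x t h2
            have d3 := L.bd_dim s t (by simp [hst])
            omega
          · exact L.bd_dim x y hxy
        · exact absurd rfl h
      bd_sq := by
        intro x z
        by_cases hx : x ∈ L.cells \ {s, t}
        swap
        · refine Finset.sum_eq_zero fun y _ => ?_
          unfold cancelBd
          rw [if_neg (fun hc => hx hc.1), zero_mul]
        by_cases hz : z ∈ L.cells \ {s, t}
        swap
        · refine Finset.sum_eq_zero fun y _ => ?_
          have h0 : cancelBd L s t y z = 0 := by
            unfold cancelBd; rw [if_neg (fun hc => hz hc.2)]
          rw [h0, mul_zero]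
        have key : ∀ y, cancelBd L s t x y * cancelBd L s t y z =
            (L.bd x y + L.bd s y * L.bd x t) * (L.bd y z + L.bd s z * L.bd y t) := by
          intro y
          by_cases hy : y ∈ L.cells \ {s, t}
          · unfold cancelBd
            rw [if_pos ⟨hx, hy⟩, if_pos ⟨hy, hz⟩]
          · have lhs0 : cancelBd L s t x y = 0 := by
              unfold cancelBd; rw [if_neg (fun hc => hy hc.2)]
            rw [lhs0, zero_mul]
            by_cases hyc : y ∈ L.cells
            · have hyst : y = s ∨ y = t := by
                simp only [Finset.mem_sdiff, Finset.mem_insert, Finset.mem_singleton] at hy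
                tauto
              rcases hyst with rfl | rfl
              · simp [L.bd_self, hst, zmod2_add_self]
              · simp [L.bd_self, hst, zmod2_add_self]
            · have b1 : L.bd x y = 0 := by
                by_contra hb; exact hyc (L.bd_mem x y hb).2
              have b2 : L.bd s y = 0 := by
                by_contra hb; exact hyc (L.bd_mem s y hb).2
              have b3 : L.bd y z = 0 := by
                by_contra hb; exact hyc (L.bd_mem y z hb).1
              have b4 : L.bd y t = 0 := by
                by_contra hb; exact hyc (L.bd_mem y t hb).1
              rw [b1, b2, b3, b4]
              ring
        rw [Finset.sum_congr rfl fun y _ => key y]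
        have expand : ∀ y : C,
            (L.bd x y + L.bd s y * L.bd x t) * (L.bd y z + L.bd s z * L.bd y t) =
            L.bd x y * L.bd y z + L.bd s z * (L.bd x y * L.bd y t)
              + L.bd x t * (L.bd s y * L.bd y z)
              + L.bd x t * L.bd s z * (L.bd s y * L.bd y t) := by
          intro y; ring
        rw [Finset.sum_congr rfl fun y _ => expand y]
        simp only [Finset.sum_add_distrib, ← Finset.mul_sum, L.bd_sq, mul_zero,
          add_zero, zero_add] }
  else L

/-- The boundary operator on mod-2 chains. -/
noncomputable def bdOp (L : LC C) : (C → ZMod 2) →ₗ[ZMod 2] (C → ZMod 2) where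
  toFun c := fun x => ∑ y, L.bd x y * c y
  map_add' a b := by
    funext x
    simp [mul_add, Finset.sum_add_distrib]
  map_smul' m a := by
    funext x
    simp only [Pi.smul_apply, smul_eq_mul, RingHom.id_apply]
    rw [Finset.mul_sum]
    exact Finset.sum_congr rfl fun y _ => by ring

/-- The `p`-chains of a Lefschetz complex: mod-2 chains supported on cells of
dimension `p`. -/
def chains (L : LC C) (p : ℤ) : Submodule (ZMod 2) (C → ZMod 2) where
  carrier := {c | ∀ x, c x ≠ 0 → x ∈ L.cells ∧ L.dim x = p}
  zero_mem' := by intro x hx; simp at hx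
  add_mem' := by
    intro a b ha hb x hx
    by_cases h1 : a x = 0
    · refine hb x fun h2 => hx ?_
      show a x + b x = 0
      rw [h1, h2, add_zero]
    · exact ha x h1
  smul_mem' := by
    intro m c hc x hx
    refine hc x fun h0 => hx ?_
    show m * c x = 0
    rw [h0, mul_zero]

/-- The `p`-cycles. -/
noncomputable def cycles (L : LC C) (p : ℤ) : Submodule (ZMod 2) (C → ZMod 2) :=
  chains L p ⊓ LinearMap.ker (bdOp L)

/-- The `p`-boundaries. -/
noncomputable def boundaries (L : LC C) (p : ℤ) : Submodule (ZMod 2) (C → ZMod 2) :=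
  Submodule.map (bdOp L) (chains L (p + 1))

/-- The mod-2 homology of a Lefschetz complex in dimension `p`. -/
noncomputable def homology (L : LC C) (p : ℤ) : Type :=
  cycles L p ⧸ (Submodule.comap (cycles L p).subtype (boundaries L p))

noncomputable instance (L : LC C) (p : ℤ) : AddCommGroup (homology L p) :=
  inferInstanceAs (AddCommGroup (cycles L p ⧸
    Submodule.comap (cycles L p).subtype (boundaries L p)))

noncomputable instance (L : LC C) (p : ℤ) : Module (ZMod 2) (homology L p) :=
  inferInstanceAs (Module (ZMod 2) (cycles L p ⧸
    Submodule.comap (cycles L p).subtype (boundaries L p)))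

/-- The boundary of the cell `y`, as a chain. -/
def col (L : LC C) (y : C) : C → ZMod 2 := fun x => L.bd x y

/-- The chain `v` is the boundary of a chain supported on cells with filter
value `< b`. -/
def IsBdryBelow (L : LC C) (f : C → ℝ) (b : ℝ) (v : C → ZMod 2) : Prop :=
  ∃ c : C → ZMod 2, (∀ z, c z ≠ 0 → z ∈ L.cells ∧ f z < b) ∧ bdOp L c = v

/-- The cell `y` gives death: `[∂y] ≠ 0` in the homology of the sublevel set
strictly below `f y`. -/
def givesDeath (L : LC C) (f : C → ℝ) (y : C) : Prop :=
  y ∈ L.cells ∧ ¬ IsBdryBelow L f (f y) (col L y)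

/-- The cell `y` gives birth: `[∂y] = 0` in the homology of the sublevel set
strictly below `f y`. -/
def givesBirth (L : LC C) (f : C → ℝ) (y : C) : Prop :=
  y ∈ L.cells ∧ IsBdryBelow L f (f y) (col L y)

/-- The unique chain supported on death-giving cells below `y` whose boundary
is `∂y` (for birth-giving `y`); junk value otherwise. -/
noncomputable def canChain (L : LC C) (f : C → ℝ) (y : C) : C → ZMod 2 :=
  if h : ∃ c : C → ZMod 2,
      (∀ z, c z ≠ 0 → f z < f y ∧ givesDeath L f z) ∧ bdOp L c = col L y
  then h.choose else 0

/-- The canonical cycle `d_y = y + c_y` of a birth-giving cell `y`. -/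
noncomputable def canCycle (L : LC C) (f : C → ℝ) (y : C) : C → ZMod 2 :=
  Pi.single y 1 + canChain L f y

/-- `v` and `w` are homologous in the sublevel complex strictly below `b`. -/
def HomBelow (L : LC C) (f : C → ℝ) (b : ℝ) (v w : C → ZMod 2) : Prop :=
  ∃ c : C → ZMod 2, (∀ z, c z ≠ 0 → z ∈ L.cells ∧ f z < b) ∧ bdOp L c = v + w

/-- Sorting a finset of cells by increasing filter value (fueled recursion). -/
noncomputable def sortAux (f : C → ℝ) : ℕ → Finset C → List C
  | 0, _ => []
  | n + 1, S =>
    if h : S.Nonempty then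
      let m := (Finset.exists_min_image S f h).choose
      m :: sortAux f n (S.erase m)
    else []

/-- The cells of `L` listed in increasing order of filter value. -/
noncomputable def sortedCells (L : LC C) (f : C → ℝ) : List C :=
  sortAux f L.cells.card L.cells

/-- An element of `S` maximizing `f`, with default value. -/
noncomputable def maxCellD (f : C → ℝ) (S : Finset C) (dflt : C) : C :=
  if h : S.Nonempty then (Finset.exists_max_image S f h).choose else dflt

/-- One step of the persistence pairing algorithm: the state is the pair
(unpaired birth-giving cells, birth-death pairs found so far), and `y` is the
next cell in the filter order.  If `y` gives birth it is added to the unpaired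
set; if `y` gives death, the unique subset `A` of the unpaired cells whose
canonical cycles sum to a cycle homologous to `∂y` below `y` is found, and `y`
is paired with the cell of `A` of maximal filter value. -/
noncomputable def pairStep (L : LC C) (f : C → ℝ) (st : Finset C × Finset (C × C))
    (y : C) : Finset C × Finset (C × C) :=
  if givesBirth L f y then (insert y st.1, st.2)
  else
    let A : Finset C :=
      if h : ∃! A : Finset C, A ⊆ st.1 ∧
          HomBelow L f (f y) (∑ x ∈ A, canCycle L f x) (col L y)
      then h.exists.choose else ∅
    let s := maxCellD f A y
    (st.1.erase s, insert (s, y) st.2)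

/-- The state of the persistence pairing after processing all cells. -/
noncomputable def pairState (L : LC C) (f : C → ℝ) : Finset C × Finset (C × C) :=
  (sortedCells L f).foldl (pairStep L f) (∅, ∅)

/-- The birth-death pairs `BD(f)` of the filter `f`. -/
noncomputable def BD (L : LC C) (f : C → ℝ) : Finset (C × C) :=
  (pairState L f).2

/-- The state of the persistence pairing after processing the cells with
filter value `< b`. -/
noncomputable def stateBelow (L : LC C) (f : C → ℝ) (b : ℝ) :
    Finset C × Finset (C × C) :=
  ((sortedCells L f).filter (fun x => decide (f x < b))).foldl (pairStep L f) (∅, ∅)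

/-- The birth-giving cells with value `< b` that are unpaired by the
persistence pairing restricted to the sublevel set below `b`. -/
noncomputable def unpairedBelow (L : LC C) (f : C → ℝ) (b : ℝ) : Finset C :=
  (stateBelow L f b).1

/-- `(s,t)` is a shallow pair: `s` is the facet of `t` with maximal filter
value and `t` is the cofacet of `s` with minimal filter value. -/
def IsShallow (L : LC C) (f : C → ℝ) (s t : C) : Prop :=
  L.bd s t = 1 ∧ (∀ x, L.bd x t ≠ 0 → f x ≤ f s) ∧ (∀ y, L.bd s y ≠ 0 → f t ≤ f y)

/-- Cancel a list of pairs in sequence. -/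
noncomputable def cancelList : LC C → List (C × C) → LC C
  | L, [] => L
  | L, p :: ps => cancelList (cancel L p.1 p.2) ps

/-- The quotient after canceling the first `k` pairs of the sequence `Φ`. -/
noncomputable def quotAt (L : LC C) {n : ℕ} (Φ : Fin n → C × C) (k : ℕ) : LC C :=
  cancelList L ((List.ofFn Φ).take k)

/-- `Φ` is a shallow order: an enumeration of the birth-death pairs of `f`
such that each pair is shallow for the quotient obtained by canceling all
preceding pairs. -/
def IsShallowOrder (L : LC C) (f : C → ℝ) {n : ℕ} (Φ : Fin n → C × C) : Prop :=
  Function.Injective Φ ∧ (∀ i, Φ i ∈ BD L f) ∧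
  ∀ i : Fin n, IsShallow (quotAt L Φ i) f (Φ i).1 (Φ i).2

/-- The depth poset: the intersection of the strict total orders induced on
`BD(f)` by all shallow orders. -/
def DepthRel (L : LC C) (f : C → ℝ) (φ ψ : C × C) : Prop :=
  φ ∈ BD L f ∧ ψ ∈ BD L f ∧
  ∀ Φ : Fin (BD L f).card → C × C, IsShallowOrder L f Φ →
    ∀ i j : Fin (BD L f).card, Φ i = φ → Φ j = ψ → i < j

/-- The rank of the lower-left minor of the ordered boundary matrix with rows
the cells of filter value `≥ a` and columns the cells of filter value `≤ b`. -/
noncomputable def llRank (L : LC C) (f : C → ℝ) (a b : ℝ) : ℕ :=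
  Matrix.rank (Matrix.of fun (x : {x : C // x ∈ L.cells ∧ a ≤ f x})
    (y : {y : C // y ∈ L.cells ∧ f y ≤ b}) => L.bd x.1 y.1)

/-- `Φ` and `Ψ` differ by transposing two adjacent positions. -/
def AdjSwap {n : ℕ} (Φ Ψ : Fin n → C × C) : Prop :=
  ∃ (k : Fin n) (hk : (k : ℕ) + 1 < n),
    Ψ k = Φ ⟨k + 1, hk⟩ ∧ Ψ ⟨k + 1, hk⟩ = Φ k ∧
    ∀ i : Fin n, i ≠ k → i ≠ ⟨k + 1, hk⟩ → Ψ i = Φ i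

/-!
Run the pairing algorithm through the cells in filter order and cancel every pair as soon as it
is found, so that pairs are canceled in increasing order of their death values. After the cells
below `b` have been processed, the surviving cells below `b` have no facets in the quotient, and
the quotient boundary of any surviving cell `y` is the sum of the canonical cycles of its quotient
facets, all of them unpaired birth-giving cells below `y`. Hence a birth-giving `y` has no quotient
facets, while for a death-giving `t` the quotient facets form exactly the set the algorithm looks
for. Its partner `s` is the top quotient facet of `t`, and `t` is the lowest quotient cofacet of
`s` because no surviving cell below `t` has a facet: the pair is shallow, and canceling it
preserves all of the above.
-/

lemma eq_one_of_ne_zero_zmod2 {a : ZMod 2} (h : a ≠ 0) : a = 1 :=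
  Fin.eq_one_of_ne_zero a h

lemma Finset.sum_symmDiff_eq_add {α M : Type*} [DecidableEq α] [AddCommGroup M]
    [Module (ZMod 2) M] (A B : Finset α) (g : α → M) :
    ∑ x ∈ symmDiff A B, g x = ∑ x ∈ A, g x + ∑ x ∈ B, g x := by
  rw [symmDiff_def, Finset.sup_eq_union, Finset.sum_union disjoint_sdiff_sdiff,
    ← Finset.sum_inter_add_sum_sdiff A B g, ← Finset.sum_inter_add_sum_sdiff B A g,
    Finset.inter_comm B A, add_add_add_comm, ZModModule.add_self, zero_add]

lemma List.eq_of_pairwise_lt_of_toFinset_eq {α β : Type*} [DecidableEq α] [LinearOrder β]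
    {g : α → β} {l₁ l₂ : List α} (h₁ : l₁.Pairwise (fun a b => g a < g b))
    (h₂ : l₂.Pairwise (fun a b => g a < g b)) (h : l₁.toFinset = l₂.toFinset) :
    l₁ = l₂ := by
  have : Std.Antisymm (fun a b : α => g a < g b) :=
    ⟨fun _ _ hab hba => (hab.trans hba).false.elim⟩
  have : Std.Irrefl (fun a b : α => g a < g b) := ⟨fun _ => lt_irrefl _⟩
  exact (List.perm_of_nodup_nodup_toFinset_eq h₁.nodup h₂.nodup h).eq_of_pairwise' h₁ h₂

section Chains

variable {L : LC C} {f : C → ℝ}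

lemma bdOp_apply (c : C → ZMod 2) (x : C) : bdOp L c x = ∑ y, L.bd x y * c y := rfl

lemma bdOp_single (y : C) : bdOp L (Pi.single y 1) = col L y := by
  funext x
  simp [bdOp_apply, Pi.single_apply, col]

lemma bdOp_bdOp (c : C → ZMod 2) : bdOp L (bdOp L c) = 0 := by
  funext x
  simp only [bdOp_apply, Finset.mul_sum, ← mul_assoc]
  rw [Finset.sum_comm]
  simp [← Finset.sum_mul, L.bd_sq]

lemma bdOp_eq_sum_smul_col (c : C → ZMod 2) : bdOp L c = ∑ z, c z • col L z := by
  funext x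
  simp [bdOp_apply, col, mul_comm]

lemma mem_cells_of_bdOp_ne_zero {c : C → ZMod 2} {x : C} (h : bdOp L c x ≠ 0) :
    x ∈ L.cells := by
  obtain ⟨y, -, hy⟩ := Finset.exists_ne_zero_of_sum_ne_zero h
  exact (L.bd_mem x y (left_ne_zero_of_mul hy)).1

lemma lt_of_bdOp_ne_zero (hf : IsFilter L f) {c : C → ZMod 2} {b : ℝ}
    (hc : ∀ z, c z ≠ 0 → f z ≤ b) {x : C} (h : bdOp L c x ≠ 0) : f x < b := by
  obtain ⟨y, -, hy⟩ := Finset.exists_ne_zero_of_sum_ne_zero h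
  exact (hf.2 x y (left_ne_zero_of_mul hy)).trans_le (hc y (right_ne_zero_of_mul hy))

def IsBdryIn (L : LC C) (P : Finset C) (v : C → ZMod 2) : Prop :=
  ∃ c : C → ZMod 2, (∀ z, c z ≠ 0 → z ∈ P) ∧ bdOp L c = v

lemma IsBdryIn.add {P : Finset C} {v w : C → ZMod 2} (hv : IsBdryIn L P v)
    (hw : IsBdryIn L P w) : IsBdryIn L P (v + w) := by
  obtain ⟨c, hc, rfl⟩ := hv
  obtain ⟨c', hc', rfl⟩ := hw
  refine ⟨c + c', fun z hz => ?_, map_add _ _ _⟩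
  by_contra hzP
  have h : c z = 0 := not_not.1 (mt (hc z) hzP)
  have h' : c' z = 0 := not_not.1 (mt (hc' z) hzP)
  exact hz (by simp [h, h'])

lemma IsBdryIn.of_insert {P : Finset C} {y : C} {v : C → ZMod 2}
    (hv : IsBdryIn L (insert y P) v) : IsBdryIn L P v ∨ IsBdryIn L P (v + col L y) := by
  obtain ⟨c, hc, hcv⟩ := hv
  by_cases hcy : c y = 0
  · refine .inl ⟨c, fun z hz => ?_, hcv⟩
    exact (Finset.mem_insert.1 (hc z hz)).resolve_left (by rintro rfl; exact hz hcy)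
  · refine .inr ⟨c + Pi.single y 1, fun z hz => ?_, by rw [map_add, bdOp_single, hcv]⟩
    obtain rfl | hzy := eq_or_ne z y
    · rw [Pi.add_apply, Pi.single_eq_same, eq_one_of_ne_zero_zmod2 hcy] at hz
      exact absurd (by decide) hz
    · rw [Pi.add_apply, Pi.single_eq_of_ne hzy, add_zero] at hz
      exact (Finset.mem_insert.1 (hc z hz)).resolve_left hzy

lemma IsBdryIn.apply_eq_zero (hf : IsFilter L f) {P : Finset C} {y : C}
    (hP : ∀ z ∈ P, f z < f y) {v : C → ZMod 2} (hv : IsBdryIn L P v) : v y = 0 := by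
  obtain ⟨c, hc, rfl⟩ := hv
  by_contra h
  obtain ⟨z, -, hz⟩ := Finset.exists_ne_zero_of_sum_ne_zero h
  exact (hf.2 y z (left_ne_zero_of_mul hz)).not_gt (hP z (hc z (right_ne_zero_of_mul hz)))

noncomputable def below (L : LC C) (f : C → ℝ) (b : ℝ) : Finset C :=
  L.cells.filter (fun z => f z < b)

@[simp]
lemma mem_below {b : ℝ} {z : C} : z ∈ below L f b ↔ z ∈ L.cells ∧ f z < b :=
  Finset.mem_filter

lemma isBdryIn_below_iff {b : ℝ} {v : C → ZMod 2} :
    IsBdryIn L (below L f b) v ↔ IsBdryBelow L f b v := by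
  simp only [IsBdryIn, IsBdryBelow, mem_below]

lemma homBelow_iff {b : ℝ} {v w : C → ZMod 2} :
    HomBelow L f b v w ↔ IsBdryIn L (below L f b) (v + w) := by
  simp only [HomBelow, IsBdryIn, mem_below]

end Chains

section Deaths

variable {L : LC C} {f : C → ℝ}

lemma givesBirth_or_givesDeath {y : C} (hy : y ∈ L.cells) :
    givesBirth L f y ∨ givesDeath L f y := by
  by_cases h : IsBdryBelow L f (f y) (col L y)
  · exact .inl ⟨hy, h⟩
  · exact .inr ⟨hy, h⟩

def IsDeathBdryBelow (L : LC C) (f : C → ℝ) (b : ℝ) (v : C → ZMod 2) : Prop :=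
  ∃ c : C → ZMod 2, (∀ z, c z ≠ 0 → f z < b ∧ givesDeath L f z) ∧ bdOp L c = v

lemma isDeathBdryBelow_zero (b : ℝ) : IsDeathBdryBelow L f b 0 :=
  ⟨0, fun _ h => absurd rfl h, map_zero _⟩

lemma IsDeathBdryBelow.add {b : ℝ} {v w : C → ZMod 2} (hv : IsDeathBdryBelow L f b v)
    (hw : IsDeathBdryBelow L f b w) : IsDeathBdryBelow L f b (v + w) := by
  obtain ⟨c, hc, rfl⟩ := hv
  obtain ⟨c', hc', rfl⟩ := hw
  refine ⟨c + c', fun z hz => ?_, map_add _ _ _⟩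
  by_cases h : c z = 0
  · exact hc' z fun h' => hz (by simp [h, h'])
  · exact hc z h

lemma IsDeathBdryBelow.mono {b b' : ℝ} (hb : b ≤ b') {v : C → ZMod 2}
    (hv : IsDeathBdryBelow L f b v) : IsDeathBdryBelow L f b' v :=
  let ⟨c, hc, hcv⟩ := hv
  ⟨c, fun z hz => ⟨(hc z hz).1.trans_le hb, (hc z hz).2⟩, hcv⟩

lemma isDeathBdryBelow_col (y : C) (hy : givesBirth L f y) :
    IsDeathBdryBelow L f (f y) (col L y) := by
  have hwf : WellFounded (fun a b : C => f a < f b) :=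
    @Finite.wellFounded_of_trans_of_irrefl _ _ _ ⟨fun _ _ _ => lt_trans⟩
      ⟨fun _ => lt_irrefl _⟩
  induction y using hwf.induction with
  | _ y ih =>
    obtain ⟨c, hc, hcy⟩ := hy.2
    rw [← hcy, bdOp_eq_sum_smul_col]
    refine Finset.sum_induction _ _ (fun _ _ => IsDeathBdryBelow.add)
      (isDeathBdryBelow_zero _) fun z _ => ?_
    by_cases hcz : c z = 0
    · rw [hcz, zero_smul]
      exact isDeathBdryBelow_zero _
    rw [eq_one_of_ne_zero_zmod2 hcz, one_smul]
    obtain ⟨hz, hzy⟩ := hc z hcz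
    rcases givesBirth_or_givesDeath hz with hb | hd
    · exact (ih z hzy hb).mono hzy.le
    · refine ⟨Pi.single z 1, fun w hw => ?_, bdOp_single z⟩
      obtain rfl : w = z := by_contra fun h => hw (Pi.single_eq_of_ne h 1)
      exact ⟨hzy, hd⟩

/-- The top cell of a nonzero such cycle would give birth. -/
lemma eq_zero_of_bdOp_eq_zero (hf : IsFilter L f) {c : C → ZMod 2}
    (hc : ∀ z, c z ≠ 0 → givesDeath L f z) (h0 : bdOp L c = 0) : c = 0 := by
  by_contra hne
  obtain ⟨z, hzc, hmax⟩ := (Finset.univ.filter (c · ≠ 0)).exists_max_image f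
    (by simpa [Finset.Nonempty, funext_iff] using hne)
  have hcz : c z ≠ 0 := (Finset.mem_filter.1 hzc).2
  refine (hc z hcz).2
    ⟨c + Pi.single z 1, fun w hw => ?_, by rw [map_add, bdOp_single, h0, zero_add]⟩
  have hwz : w ≠ z := by
    rintro rfl
    rw [Pi.add_apply, Pi.single_eq_same, eq_one_of_ne_zero_zmod2 hcz] at hw
    exact hw (by decide)
  have hcw : c w ≠ 0 := by rwa [Pi.add_apply, Pi.single_eq_of_ne hwz, add_zero] at hw
  have hw : w ∈ L.cells := (hc w hcw).1
  refine ⟨hw, (hmax w (by simpa using hcw)).lt_of_ne fun h => hwz ?_⟩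
  exact hf.1 w hw z (hc z hcz).1 h

lemma canChain_spec {y : C} (hy : givesBirth L f y) :
    (∀ z, canChain L f y z ≠ 0 → f z < f y ∧ givesDeath L f z) ∧
      bdOp L (canChain L f y) = col L y := by
  have hex := isDeathBdryBelow_col y hy
  unfold IsDeathBdryBelow at hex
  rw [canChain, dif_pos hex]
  exact hex.choose_spec

lemma bdOp_canCycle {y : C} (hy : givesBirth L f y) :
    bdOp L (canCycle L f y) = 0 := by
  rw [canCycle, map_add, bdOp_single, (canChain_spec hy).2, ZModModule.add_self]

lemma canCycle_ne_zero {y z : C} (hy : givesBirth L f y)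
    (hz : canCycle L f y z ≠ 0) : z = y ∨ (f z < f y ∧ givesDeath L f z) := by
  refine or_iff_not_imp_left.2 fun hzy => (canChain_spec hy).1 z ?_
  rwa [canCycle, Pi.add_apply, Pi.single_eq_of_ne hzy, zero_add] at hz

lemma canCycle_apply_self {y : C} (hy : givesBirth L f y) :
    canCycle L f y y = 1 := by
  have h : canChain L f y y = 0 := by_contra fun h => ((canChain_spec hy).1 y h).1.false
  rw [canCycle, Pi.add_apply, Pi.single_eq_same, h, add_zero]

lemma canCycle_apply_eq_zero {y z : C} (hy : givesBirth L f y)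
    (h : f y < f z) : canCycle L f y z = 0 := by
  by_contra hz
  rcases canCycle_ne_zero hy hz with rfl | ⟨hzy, -⟩
  · exact h.false
  · exact (h.trans hzy).false

lemma givesDeath_of_sum_canChain_ne_zero {A : Finset C} (hA : ∀ x ∈ A, givesBirth L f x)
    {z : C} (hz : (∑ x ∈ A, canChain L f x) z ≠ 0) : givesDeath L f z := by
  rw [Finset.sum_apply] at hz
  obtain ⟨x, hxA, hxz⟩ := Finset.exists_ne_zero_of_sum_ne_zero hz
  exact ((canChain_spec (hA x hxA)).1 z hxz).2

lemma isBdryIn_col_of_givesBirth {P : Finset C} {y : C}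
    (hy : givesBirth L f y) (hP : ∀ z, f z < f y → givesDeath L f z → z ∈ P) :
    IsBdryIn L P (col L y) :=
  ⟨canChain L f y, fun z hz => hP z ((canChain_spec hy).1 z hz).1
    ((canChain_spec hy).1 z hz).2, (canChain_spec hy).2⟩

end Deaths

section Algorithm

variable {L : LC C} {f : C → ℝ}

lemma sortAux_spec (hf : IsFilter L f) (n : ℕ) :
    ∀ S : Finset C, S.card = n → S ⊆ L.cells →
      (sortAux f n S).toFinset = S ∧ (sortAux f n S).Pairwise (fun a b => f a < f b) := by
  induction n with
  | zero =>
    intro S hS _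
    simp [Finset.card_eq_zero.1 hS, sortAux]
  | succ n ih =>
    intro S hS hSc
    have hne : S.Nonempty := Finset.card_pos.1 (by omega)
    obtain ⟨hm, hmin⟩ := (S.exists_min_image f hne).choose_spec
    set m := (S.exists_min_image f hne).choose
    obtain ⟨ih1, ih2⟩ := ih (S.erase m) (by rw [Finset.card_erase_of_mem hm, hS]; rfl)
      ((S.erase_subset m).trans hSc)
    have hunfold : sortAux f (n + 1) S = m :: sortAux f n (S.erase m) := by
      simp only [sortAux, dif_pos hne]; rfl
    rw [hunfold, List.toFinset_cons, ih1, Finset.insert_erase hm, List.pairwise_cons]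
    refine ⟨rfl, fun a ha => ?_, ih2⟩
    have haS : a ∈ S.erase m := by rw [← ih1]; exact List.mem_toFinset.2 ha
    refine (hmin a (Finset.mem_of_mem_erase haS)).lt_of_ne fun h => ?_
    exact Finset.ne_of_mem_erase haS (hf.1 m (hSc hm) a (hSc (Finset.mem_of_mem_erase haS)) h).symm

lemma sortedCells_spec (hf : IsFilter L f) :
    (sortedCells L f).toFinset = L.cells ∧ (sortedCells L f).Pairwise (fun a b => f a < f b) :=
  sortAux_spec hf _ L.cells rfl subset_rfl

lemma below_eq_toFinset_of_sortedCells_eq (hf : IsFilter L f) {done rest : List C} {y : C}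
    (h : sortedCells L f = done ++ y :: rest) :
    y ∈ L.cells ∧ below L f (f y) = done.toFinset := by
  obtain ⟨htf, hpw⟩ := sortedCells_spec hf
  rw [h] at htf hpw
  obtain ⟨-, hrest, hdone⟩ := List.pairwise_append.1 hpw
  have hcells : ∀ z, z ∈ L.cells ↔ z ∈ done ∨ z = y ∨ z ∈ rest := by
    simp only [← htf, List.mem_toFinset, List.mem_append, List.mem_cons, implies_true]
  refine ⟨(hcells y).2 (.inr (.inl rfl)), Finset.ext fun z => ?_⟩
  rw [mem_below, List.mem_toFinset, hcells]
  constructor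
  · rintro ⟨hz | rfl | hz, hzy⟩
    · exact hz
    · exact absurd hzy (lt_irrefl _)
    · exact absurd ((List.pairwise_cons.1 hrest).1 z hz) hzy.not_gt
  · exact fun hz => ⟨.inl hz, hdone z hz y List.mem_cons_self⟩

lemma maxCellD_spec {α : Type} {f : α → ℝ} {S : Finset α} (hS : S.Nonempty) (d : α) :
    maxCellD f S d ∈ S ∧ ∀ x ∈ S, f x ≤ f (maxCellD f S d) := by
  rw [maxCellD, dif_pos hS]
  exact (S.exists_max_image f hS).choose_spec

lemma pairStep_of_not_givesBirth {st : Finset C × Finset (C × C)} {y : C}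
    (hy : ¬ givesBirth L f y) {A : Finset C}
    (hA : ∀ A',
      A' ⊆ st.1 ∧ HomBelow L f (f y) (∑ x ∈ A', canCycle L f x) (col L y) ↔ A' = A) :
    pairStep L f st y = (st.1.erase (maxCellD f A y), insert (maxCellD f A y, y) st.2) := by
  have hex : ∃! A', A' ⊆ st.1 ∧ HomBelow L f (f y) (∑ x ∈ A', canCycle L f x) (col L y) :=
    ⟨A, (hA A).2 rfl, fun A' h => (hA A').1 h⟩
  simp only [pairStep, if_neg hy, dif_pos hex, (hA _).1 hex.exists.choose_spec]

end Algorithm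

section Cancellation

variable {L : LC C} {f : C → ℝ}

lemma cancelList_append (L : LC C) (l₁ l₂ : List (C × C)) :
    cancelList L (l₁ ++ l₂) = cancelList (cancelList L l₁) l₂ := by
  induction l₁ generalizing L with
  | nil => rfl
  | cons p ps ih => exact ih _

lemma cancel_cells {s t : C} (h : L.bd s t = 1) : (cancel L s t).cells = L.cells \ {s, t} := by
  rw [cancel, dif_pos h]

lemma cancel_bd_of_mem {s t x y : C} (h : L.bd s t = 1) (hx : x ∈ (cancel L s t).cells)
    (hy : y ∈ (cancel L s t).cells) :
    (cancel L s t).bd x y = L.bd x y + L.bd s y * L.bd x t := by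
  rw [cancel_cells h] at hx hy
  rw [cancel, dif_pos h]
  exact if_pos ⟨hx, hy⟩

def canceledCells (π : List (C × C)) : Finset C :=
  (π.map Prod.fst).toFinset ∪ (π.map Prod.snd).toFinset

lemma mem_canceledCells_of_mem_fst {α : Type} [DecidableEq α] {π : List (α × α)} {x : α}
    (h : x ∈ π.map Prod.fst) : x ∈ canceledCells π :=
  Finset.mem_union_left _ (List.mem_toFinset.2 h)

lemma mem_canceledCells_of_mem_snd {α : Type} [DecidableEq α] {π : List (α × α)} {x : α}
    (h : x ∈ π.map Prod.snd) : x ∈ canceledCells π :=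
  Finset.mem_union_right _ (List.mem_toFinset.2 h)

lemma canceledCells_append {α : Type} [DecidableEq α] (π : List (α × α)) (s t : α) :
    canceledCells (π ++ [(s, t)]) = canceledCells π ∪ {s, t} := by
  ext x
  simp only [canceledCells, List.map_append, List.toFinset_append, Finset.mem_union,
    List.mem_toFinset, List.map_cons, List.map_nil, List.mem_cons, List.not_mem_nil,
    or_false, Finset.mem_insert, Finset.mem_singleton]
  tauto

/-- `e` represents the cell `y` of the quotient `cancelList L π` as a chain of `L`. -/
structure IsRep (L : LC C) (f : C → ℝ) (π : List (C × C)) (y : C) (e : C → ZMod 2) :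
    Prop where
  apply_self : e y = 1
  support : ∀ z, e z ≠ 0 → z = y ∨ (z ∈ π.map Prod.snd ∧ f z < f y)
  bdOp_fst : ∀ x ∈ π.map Prod.fst, bdOp L e x = 0
  bd_eq : ∀ x ∈ (cancelList L π).cells, (cancelList L π).bd x y = bdOp L e x

lemma IsRep.le {π : List (C × C)} {y : C} {e : C → ZMod 2} (he : IsRep L f π y e) {z : C}
    (hz : e z ≠ 0) : f z ≤ f y := by
  rcases he.support z hz with rfl | ⟨-, h⟩
  exacts [le_rfl, h.le]

lemma isRep_nil (y : C) : IsRep L f [] y (Pi.single y 1) where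
  apply_self := Pi.single_eq_same y 1
  support z hz := .inl (by_contra fun h => hz (Pi.single_eq_of_ne h 1))
  bdOp_fst _ h := absurd h List.not_mem_nil
  bd_eq x _ := by rw [bdOp_single]; rfl

/-- Canceling `(s, t)` corrects the representative of `y` by `∂(s, y)` times that of `t`,
matching the formula `∂'(x, y) = ∂(x, y) + ∂(s, y) ∂(x, t)`. -/
lemma IsRep.append {π : List (C × C)} {s t y : C} {e e' : C → ZMod 2}
    (hst : (cancelList L π).bd s t = 1) (hs : s ∈ (cancelList L π).cells)
    (he : IsRep L f π t e) (he' : IsRep L f π y e')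
    (hy : y ∈ (cancel (cancelList L π) s t).cells) (hyπ : y ∉ π.map Prod.snd)
    (hlt : (cancelList L π).bd s y ≠ 0 → f t < f y) :
    IsRep L f (π ++ [(s, t)]) y (e' + (cancelList L π).bd s y • e) := by
  set ε := (cancelList L π).bd s y
  have hyt : y ≠ t := by rintro rfl; simp [cancel_cells hst] at hy
  have hey : e y = 0 := by_contra fun h => (he.support y h).elim hyt fun h => hyπ h.1
  have hQ : cancelList L (π ++ [(s, t)]) = cancel (cancelList L π) s t :=
    cancelList_append L π [(s, t)]
  refine ⟨by simp [he'.apply_self, hey], fun z hz => ?_, fun x hx => ?_, fun x hx => ?_⟩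
  · by_cases h : e' z = 0
    · have hεz : ε * e z ≠ 0 := by simpa [h] using hz
      have hty := hlt (left_ne_zero_of_mul hεz)
      rcases he.support z (right_ne_zero_of_mul hεz) with rfl | ⟨hzπ, hzt⟩
      · exact .inr ⟨by simp, hty⟩
      · exact .inr ⟨by simp [hzπ], hzt.trans hty⟩
    · rcases he'.support z h with rfl | ⟨hzπ, hzy⟩
      · exact .inl rfl
      · exact .inr ⟨by simp [hzπ], hzy⟩
  · rw [List.map_append, List.mem_append] at hx
    rcases hx with hx | hx
    · simp [he'.bdOp_fst x hx, he.bdOp_fst x hx]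
    · obtain rfl : x = s := by simpa using hx
      rw [map_add, map_smul, Pi.add_apply, Pi.smul_apply, ← he'.bd_eq x hs, ← he.bd_eq x hs,
        hst, smul_eq_mul, mul_one, ZModModule.add_self]
  · rw [hQ] at hx ⊢
    have hx' : x ∈ (cancelList L π).cells := (Finset.mem_sdiff.1 (cancel_cells hst ▸ hx)).1
    rw [cancel_bd_of_mem hst hx hy, map_add, map_smul, Pi.add_apply, Pi.smul_apply,
      ← he'.bd_eq x hx', ← he.bd_eq x hx', smul_eq_mul]

end Cancellation

section Pairing

variable {L : LC C} {f : C → ℝ}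

noncomputable def LC.facets (L : LC C) (y : C) : Finset C :=
  L.cells.filter (fun x => L.bd x y ≠ 0)

lemma LC.mem_facets {y x : C} : x ∈ L.facets y ↔ L.bd x y ≠ 0 :=
  Finset.mem_filter.trans ⟨And.right, fun h => ⟨(L.bd_mem x y h).1, h⟩⟩

def IsShallowSeq (L : LC C) (f : C → ℝ) (π : List (C × C)) : Prop :=
  ∀ (k : ℕ) (hk : k < π.length), IsShallow (cancelList L (π.take k)) f π[k].1 π[k].2

lemma IsShallowSeq.append {π : List (C × C)} {s t : C} (hπ : IsShallowSeq L f π)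
    (h : IsShallow (cancelList L π) f s t) : IsShallowSeq L f (π ++ [(s, t)]) := by
  intro k hk
  rw [List.length_append, List.length_singleton] at hk
  rcases (Nat.lt_succ_iff.1 hk).lt_or_eq with hk | rfl
  · rw [List.take_append_of_le_length hk.le, List.getElem_append_left hk]
    exact hπ k hk
  · rwa [List.take_left' rfl, List.getElem_concat_length rfl]

/-- Invariant of the pairing algorithm after processing the cells of `P`; `π` lists the pairs
found so far in the order in which they were found. -/
structure PairingInv (L : LC C) (f : C → ℝ) (P : Finset C) (st : Finset C × Finset (C × C))
    (π : List (C × C)) : Prop where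
  pairs_eq : st.2 = π.toFinset
  unpaired_eq : st.1 = P.filter (givesBirth L f) \ (π.map Prod.fst).toFinset
  canceled_subset : canceledCells π ⊆ P
  givesDeath_snd : ∀ p ∈ π, givesDeath L f p.2
  mem_snd_of_givesDeath : ∀ z ∈ P, givesDeath L f z → z ∈ π.map Prod.snd
  sorted : π.Pairwise (fun p q => f p.2 < f q.2)
  unpaired_indep : ∀ A ⊆ st.1, IsBdryIn L P (∑ x ∈ A, canCycle L f x) → A = ∅
  cells_eq : (cancelList L π).cells = L.cells \ canceledCells π
  bd_eq_zero : ∀ y ∈ (cancelList L π).cells, y ∈ P → ∀ x, (cancelList L π).bd x y = 0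
  exists_rep : ∀ y ∈ (cancelList L π).cells, ∃ e, IsRep L f π y e
  shallow : IsShallowSeq L f π

lemma pairingInv_empty : PairingInv L f ∅ (∅, ∅) [] where
  pairs_eq := rfl
  unpaired_eq := by simp
  canceled_subset := by simp [canceledCells]
  givesDeath_snd := by simp
  mem_snd_of_givesDeath := by simp
  sorted := List.Pairwise.nil
  unpaired_indep A hA _ := Finset.subset_empty.1 hA
  cells_eq := by simp [cancelList, canceledCells]
  bd_eq_zero _ _ h := absurd h (Finset.notMem_empty _)
  exists_rep y _ := ⟨_, isRep_nil y⟩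
  shallow _ hk := absurd hk (Nat.not_lt_zero _)

namespace PairingInv

variable {P : Finset C} {st : Finset C × Finset (C × C)} {π : List (C × C)}

lemma mem_of_mem_unpaired (inv : PairingInv L f P st π) {x : C} (hx : x ∈ st.1) :
    x ∈ P ∧ givesBirth L f x := by
  rw [inv.unpaired_eq] at hx
  exact Finset.mem_filter.1 (Finset.mem_sdiff.1 hx).1

lemma snd_mem (inv : PairingInv L f P st π) {z : C} (hz : z ∈ π.map Prod.snd) : z ∈ P :=
  inv.canceled_subset (mem_canceledCells_of_mem_snd hz)

lemma notMem_canceledCells (inv : PairingInv L f P st π) {x : C}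
    (hx : x ∈ (cancelList L π).cells) : x ∉ canceledCells π := by
  rw [inv.cells_eq] at hx
  exact (Finset.mem_sdiff.1 hx).2

lemma mem_cells_of_notMem (inv : PairingInv L f P st π) {y : C} (hy : y ∈ L.cells)
    (hyP : y ∉ P) : y ∈ (cancelList L π).cells := by
  rw [inv.cells_eq]
  exact Finset.mem_sdiff.2 ⟨hy, fun h => hyP (inv.canceled_subset h)⟩

variable {y t : C} {e : C → ZMod 2}

lemma facets_subset_unpaired (hf : IsFilter L f) (inv : PairingInv L f (below L f (f y)) st π)
    (he : IsRep L f π y e) : (cancelList L π).facets y ⊆ st.1 := by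
  intro x hx
  have hxQ := ((cancelList L π).bd_mem x y (LC.mem_facets.1 hx)).1
  have hex : bdOp L e x ≠ 0 := he.bd_eq x hxQ ▸ LC.mem_facets.1 hx
  have hxP : x ∈ below L f (f y) :=
    mem_below.2 ⟨mem_cells_of_bdOp_ne_zero hex, lt_of_bdOp_ne_zero hf (fun z => he.le) hex⟩
  have hxc := inv.notMem_canceledCells hxQ
  have hxb : givesBirth L f x := (givesBirth_or_givesDeath (mem_below.1 hxP).1).resolve_right
    fun hd => hxc (mem_canceledCells_of_mem_snd (inv.mem_snd_of_givesDeath x hxP hd))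
  rw [inv.unpaired_eq]
  refine Finset.mem_sdiff.2 ⟨Finset.mem_filter.2 ⟨hxP, hxb⟩, fun h => hxc ?_⟩
  exact mem_canceledCells_of_mem_fst (List.mem_toFinset.1 h)

lemma givesDeath_of_bdOp_add_sum_ne_zero (hf : IsFilter L f)
    (inv : PairingInv L f (below L f (f y)) st π) (he : IsRep L f π y e) {z : C}
    (hz : (bdOp L e + ∑ x ∈ (cancelList L π).facets y, canCycle L f x) z ≠ 0) :
    givesDeath L f z := by
  set A := (cancelList L π).facets y
  have hA : ∀ x ∈ A, givesBirth L f x :=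
    fun x hx => (inv.mem_of_mem_unpaired (inv.facets_subset_unpaired hf he hx)).2
  by_cases hcz : (∑ x ∈ A, canChain L f x) z = 0
  swap
  · exact givesDeath_of_sum_canChain_ne_zero hA hcz
  simp only [canCycle, Finset.sum_add_distrib, Pi.add_apply, Finset.sum_apply,
    Finset.sum_pi_single] at hz hcz
  rw [hcz, add_zero] at hz
  by_cases hzQ : z ∈ (cancelList L π).cells
  · rw [← he.bd_eq z hzQ] at hz
    by_cases h : (cancelList L π).bd z y = 0
    · simp [A, LC.mem_facets, h] at hz
    · rw [if_pos (LC.mem_facets.2 h), eq_one_of_ne_zero_zmod2 h] at hz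
      exact absurd (by decide) hz
  · have hzA : z ∉ A := fun h => hzQ ((cancelList L π).bd_mem z y (LC.mem_facets.1 h)).1
    rw [if_neg hzA, add_zero] at hz
    have hzc : z ∈ canceledCells π := by
      by_contra h
      exact hzQ (inv.cells_eq ▸ Finset.mem_sdiff.2 ⟨mem_cells_of_bdOp_ne_zero hz, h⟩)
    rcases Finset.mem_union.1 hzc with h | h
    · exact absurd (he.bdOp_fst z (List.mem_toFinset.1 h)) hz
    · obtain ⟨p, hp, rfl⟩ := List.mem_map.1 (List.mem_toFinset.1 h)
      exact inv.givesDeath_snd p hp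

/-- The difference of the two sides is a cycle supported on death-giving cells. -/
lemma sum_canCycle_facets (hf : IsFilter L f) (inv : PairingInv L f (below L f (f y)) st π)
    (he : IsRep L f π y e) : ∑ x ∈ (cancelList L π).facets y, canCycle L f x = bdOp L e := by
  have hcycle : bdOp L (bdOp L e + ∑ x ∈ (cancelList L π).facets y, canCycle L f x) = 0 := by
    rw [map_add, bdOp_bdOp, map_sum, Finset.sum_eq_zero fun x hx =>
      bdOp_canCycle (inv.mem_of_mem_unpaired (inv.facets_subset_unpaired hf he hx)).2, add_zero]
  have h0 := eq_zero_of_bdOp_eq_zero hf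
    (fun z hz => inv.givesDeath_of_bdOp_add_sum_ne_zero hf he hz) hcycle
  exact ((add_eq_zero_iff_eq_neg.1 h0).trans (ZModModule.neg_eq_self _)).symm

lemma isBdryIn_sum_canCycle_facets_add_col (hf : IsFilter L f)
    (inv : PairingInv L f (below L f (f y)) st π) (he : IsRep L f π y e) :
    IsBdryIn L (below L f (f y))
      (∑ x ∈ (cancelList L π).facets y, canCycle L f x + col L y) := by
  refine ⟨e + Pi.single y 1, fun z hz => ?_, by
    rw [map_add, bdOp_single, inv.sum_canCycle_facets hf he]⟩
  have hzy : z ≠ y := by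
    rintro rfl
    rw [Pi.add_apply, he.apply_self, Pi.single_eq_same] at hz
    exact hz (by decide)
  rw [Pi.add_apply, Pi.single_eq_of_ne hzy, add_zero] at hz
  exact inv.snd_mem ((he.support z hz).resolve_left hzy).1

lemma mem_cells_self (inv : PairingInv L f (below L f (f y)) st π) (hy : y ∈ L.cells) :
    y ∈ (cancelList L π).cells :=
  inv.mem_cells_of_notMem hy (by simp)

lemma eq_of_isBdryIn_add {P : Finset C} (inv : PairingInv L f P st π) {A B : Finset C}
    (hA : A ⊆ st.1) (hB : B ⊆ st.1) {v : C → ZMod 2}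
    (hAv : IsBdryIn L P (∑ x ∈ A, canCycle L f x + v))
    (hBv : IsBdryIn L P (∑ x ∈ B, canCycle L f x + v)) : A = B := by
  refine symmDiff_eq_bot.1 (inv.unpaired_indep _ ?_ ?_)
  · exact fun x hx => (Finset.mem_symmDiff.1 hx).elim (fun h => hA h.1) (fun h => hB h.1)
  · rw [Finset.sum_symmDiff_eq_add]
    have h := hAv.add hBv
    rwa [add_add_add_comm, ZModModule.add_self, add_zero] at h

lemma facets_eq_empty_of_givesBirth (hf : IsFilter L f)
    (inv : PairingInv L f (below L f (f y)) st π) (hy : y ∈ L.cells) (hb : givesBirth L f y) :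
    (cancelList L π).facets y = ∅ := by
  obtain ⟨e, he⟩ := inv.exists_rep y (inv.mem_cells_self hy)
  refine inv.unpaired_indep _ (inv.facets_subset_unpaired hf he) ?_
  have h := (inv.isBdryIn_sum_canCycle_facets_add_col hf he).add
    (isBdryIn_col_of_givesBirth hb fun z hz hd => mem_below.2 ⟨hd.1, hz⟩)
  rwa [add_assoc, ZModModule.add_self, add_zero] at h

/-- A new birth-giving cell `y` cannot enter a relation: its canonical cycle is the only one
meeting `y`, while boundaries of chains below `y` vanish there. -/
lemma unpaired_indep_insert (hf : IsFilter L f) (inv : PairingInv L f (below L f (f y)) st π)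
    (hb : givesBirth L f y) {A : Finset C} (hA : A ⊆ insert y st.1)
    (hbd : IsBdryIn L (insert y (below L f (f y))) (∑ x ∈ A, canCycle L f x)) : A = ∅ := by
  have hP : IsBdryIn L (below L f (f y)) (∑ x ∈ A, canCycle L f x) := by
    refine hbd.of_insert.elim id fun h => ?_
    have h' := h.add (isBdryIn_col_of_givesBirth hb fun z hz hd => mem_below.2 ⟨hd.1, hz⟩)
    rwa [add_assoc, ZModModule.add_self, add_zero] at h'
  have hyA : y ∉ A := by
    intro hyA
    have h0 := hP.apply_eq_zero hf fun z hz => (mem_below.1 hz).2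
    rw [Finset.sum_apply, Finset.sum_eq_single_of_mem y hyA fun x hx hxy => ?_,
      canCycle_apply_self hb] at h0
    · exact one_ne_zero h0
    · have hx := inv.mem_of_mem_unpaired ((Finset.mem_insert.1 (hA hx)).resolve_left hxy)
      exact canCycle_apply_eq_zero hx.2 (mem_below.1 hx.1).2
  refine inv.unpaired_indep A (fun x hx => ?_) hP
  exact (Finset.mem_insert.1 (hA hx)).resolve_left (by rintro rfl; exact hyA hx)

lemma insert_of_givesBirth (hf : IsFilter L f) (inv : PairingInv L f (below L f (f y)) st π)
    (hy : y ∈ L.cells) (hb : givesBirth L f y) :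
    PairingInv L f (insert y (below L f (f y))) (insert y st.1, st.2) π where
  pairs_eq := inv.pairs_eq
  unpaired_eq := by
    have hyπ : y ∉ (π.map Prod.fst).toFinset :=
      fun h => (lt_irrefl (f y))
        (mem_below.1 (inv.canceled_subset (mem_canceledCells_of_mem_fst (List.mem_toFinset.1 h)))).2
    rw [inv.unpaired_eq, Finset.filter_insert, if_pos hb, Finset.insert_sdiff_of_notMem _ hyπ]
  canceled_subset := inv.canceled_subset.trans (Finset.subset_insert _ _)
  givesDeath_snd := inv.givesDeath_snd
  mem_snd_of_givesDeath z hz hd := inv.mem_snd_of_givesDeath z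
    ((Finset.mem_insert.1 hz).resolve_left (by rintro rfl; exact hd.2 hb.2)) hd
  sorted := inv.sorted
  unpaired_indep _ hA := inv.unpaired_indep_insert hf hb hA
  cells_eq := inv.cells_eq
  bd_eq_zero y' hy' hy'P x := by
    rcases Finset.mem_insert.1 hy'P with rfl | h
    · by_contra hx
      simpa [inv.facets_eq_empty_of_givesBirth hf hy hb] using LC.mem_facets.2 hx
    · exact inv.bd_eq_zero y' hy' h x
  exists_rep := inv.exists_rep
  shallow := inv.shallow

lemma facets_nonempty_of_givesDeath (hf : IsFilter L f)
    (inv : PairingInv L f (below L f (f t)) st π) (ht : t ∈ L.cells) (hd : givesDeath L f t) :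
    ((cancelList L π).facets t).Nonempty := by
  obtain ⟨e, he⟩ := inv.exists_rep t (inv.mem_cells_self ht)
  rw [Finset.nonempty_iff_ne_empty]
  intro h
  have hbd := inv.isBdryIn_sum_canCycle_facets_add_col hf he
  rw [h, Finset.sum_empty, zero_add, isBdryIn_below_iff] at hbd
  exact hd.2 hbd

lemma homBelow_iff_eq_facets (hf : IsFilter L f) (inv : PairingInv L f (below L f (f t)) st π)
    (ht : t ∈ L.cells) {A : Finset C} :
    A ⊆ st.1 ∧ HomBelow L f (f t) (∑ x ∈ A, canCycle L f x) (col L t) ↔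
      A = (cancelList L π).facets t := by
  obtain ⟨e, he⟩ := inv.exists_rep t (inv.mem_cells_self ht)
  have hsub := inv.facets_subset_unpaired hf he
  have hbd := inv.isBdryIn_sum_canCycle_facets_add_col hf he
  rw [homBelow_iff]
  exact ⟨fun h => inv.eq_of_isBdryIn_add h.1 hsub h.2 hbd, by rintro rfl; exact ⟨hsub, hbd⟩⟩

/-- Surviving cells below `t` have no facets, so none of them is a cofacet of a facet of `t`. -/
lemma isShallow_maxCellD_facets (inv : PairingInv L f (below L f (f t)) st π)
    (hne : ((cancelList L π).facets t).Nonempty) :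
    IsShallow (cancelList L π) f (maxCellD f ((cancelList L π).facets t) t) t := by
  obtain ⟨hs, hmax⟩ := maxCellD_spec (f := f) hne t
  refine ⟨eq_one_of_ne_zero_zmod2 (LC.mem_facets.1 hs), fun x hx => hmax x (LC.mem_facets.2 hx),
    fun y hsy => ?_⟩
  by_contra hlt
  have hyQ := ((cancelList L π).bd_mem _ y hsy).2
  have hy : y ∈ L.cells := by
    rw [inv.cells_eq] at hyQ
    exact (Finset.mem_sdiff.1 hyQ).1
  exact hsy (inv.bd_eq_zero y hyQ (mem_below.2 ⟨hy, not_le.1 hlt⟩) _)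

lemma bd_cancel_eq_zero (inv : PairingInv L f (below L f (f t)) st π) {s : C}
    (hst : (cancelList L π).bd s t = 1) {y : C} (hy : y ∈ (cancel (cancelList L π) s t).cells)
    (hyP : y ∈ insert t (below L f (f t))) (x : C) :
    (cancel (cancelList L π) s t).bd x y = 0 := by
  have hyQ := Finset.mem_sdiff.1 (cancel_cells hst ▸ hy)
  have hyP' : y ∈ below L f (f t) :=
    (Finset.mem_insert.1 hyP).resolve_left fun h => hyQ.2 (by simp [h])
  by_contra hx
  rw [cancel_bd_of_mem hst ((cancel _ s t).bd_mem x y hx).1 hy, inv.bd_eq_zero y hyQ.1 hyP' x,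
    inv.bd_eq_zero y hyQ.1 hyP' s, zero_mul, add_zero] at hx
  exact hx rfl

lemma exists_rep_cancel (hf : IsFilter L f) (inv : PairingInv L f (below L f (f t)) st π)
    (ht : t ∈ L.cells) {s : C} (hst : IsShallow (cancelList L π) f s t) {y : C}
    (hy : y ∈ (cancel (cancelList L π) s t).cells) : ∃ e, IsRep L f (π ++ [(s, t)]) y e := by
  have hyQ := Finset.mem_sdiff.1 (cancel_cells hst.1 ▸ hy)
  obtain ⟨e, he⟩ := inv.exists_rep t (inv.mem_cells_self ht)
  obtain ⟨e', he'⟩ := inv.exists_rep y hyQ.1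
  have hs : s ∈ (cancelList L π).cells :=
    ((cancelList L π).bd_mem s t (by rw [hst.1]; exact one_ne_zero)).1
  have hyc : y ∈ L.cells := by
    have := hyQ.1
    rw [inv.cells_eq] at this
    exact (Finset.mem_sdiff.1 this).1
  have hyt : y ≠ t := fun h => hyQ.2 (by simp [h])
  refine ⟨_, he.append hst.1 hs he' hy ?_ fun hsy => ?_⟩
  · exact fun h => inv.notMem_canceledCells hyQ.1 (mem_canceledCells_of_mem_snd h)
  · exact (hst.2.2 y hsy).lt_of_ne fun h => hyt (hf.1 t ht y hyc h).symm

lemma erase_unpaired_eq {P : Finset C} (inv : PairingInv L f P st π) (ht : ¬ givesBirth L f t)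
    (s : C) :
    st.1.erase s =
      (insert t P).filter (givesBirth L f) \ ((π ++ [(s, t)]).map Prod.fst).toFinset := by
  ext x
  simp only [inv.unpaired_eq, Finset.mem_erase, Finset.mem_sdiff, Finset.mem_filter,
    Finset.mem_insert, List.map_append, List.toFinset_append, Finset.mem_union,
    List.mem_toFinset, List.map_cons, List.map_nil, List.mem_singleton]
  constructor
  · rintro ⟨hxs, ⟨hxP, hxb⟩, hxπ⟩
    exact ⟨⟨.inr hxP, hxb⟩, by tauto⟩
  · rintro ⟨⟨rfl | hxP, hxb⟩, hxπ⟩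
    · exact absurd hxb ht
    · exact ⟨by tauto, ⟨hxP, hxb⟩, by tauto⟩

lemma insert_of_givesDeath (hf : IsFilter L f) (inv : PairingInv L f (below L f (f t)) st π)
    (ht : t ∈ L.cells) (hd : givesDeath L f t) {s : C} (hs : s ∈ st.1)
    (hst : IsShallow (cancelList L π) f s t)
    (hs_mem : ∀ A ⊆ st.1,
      IsBdryIn L (below L f (f t)) (∑ x ∈ A, canCycle L f x + col L t) → s ∈ A) :
    PairingInv L f (insert t (below L f (f t))) (st.1.erase s, insert (s, t) st.2)
      (π ++ [(s, t)]) where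
  pairs_eq := by
    rw [inv.pairs_eq, List.toFinset_append, List.toFinset_cons, List.toFinset_nil,
      insert_empty_eq, Finset.union_singleton]
  unpaired_eq := inv.erase_unpaired_eq (fun hb => hd.2 hb.2) s
  canceled_subset := by
    rw [canceledCells_append]
    refine Finset.union_subset (inv.canceled_subset.trans (Finset.subset_insert _ _)) ?_
    exact Finset.insert_subset (Finset.mem_insert_of_mem (inv.mem_of_mem_unpaired hs).1) (by simp)
  givesDeath_snd p hp := by
    rcases List.mem_append.1 hp with hp | hp
    · exact inv.givesDeath_snd p hp
    · rw [List.mem_singleton.1 hp]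
      exact hd
  mem_snd_of_givesDeath z hz hzd := by
    rw [List.map_append, List.mem_append]
    rcases Finset.mem_insert.1 hz with rfl | hz
    · exact .inr (by simp)
    · exact .inl (inv.mem_snd_of_givesDeath z hz hzd)
  sorted := by
    refine List.pairwise_append.2 ⟨inv.sorted, List.pairwise_singleton _ _, fun p hp q hq => ?_⟩
    rw [List.mem_singleton.1 hq]
    exact (mem_below.1 (inv.snd_mem (List.mem_map_of_mem hp))).2
  unpaired_indep A hA hbd := by
    have hA' : A ⊆ st.1 := hA.trans (Finset.erase_subset _ _)
    refine hbd.of_insert.elim (inv.unpaired_indep A hA') fun h => ?_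
    exact absurd (hA (hs_mem A hA' h)) (Finset.notMem_erase s st.1)
  cells_eq := by
    rw [cancelList_append, cancelList, cancelList, cancel_cells hst.1, inv.cells_eq,
      canceledCells_append, sdiff_sdiff_left]
    rfl
  bd_eq_zero y hy hyP x := by
    rw [cancelList_append] at hy ⊢
    exact inv.bd_cancel_eq_zero hst.1 hy hyP x
  exists_rep y hy := by
    rw [cancelList_append] at hy
    exact inv.exists_rep_cancel hf ht hst hy
  shallow := inv.shallow.append hst

lemma exists_pairStep (hf : IsFilter L f) (inv : PairingInv L f (below L f (f y)) st π)
    (hy : y ∈ L.cells) :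
    ∃ π', PairingInv L f (insert y (below L f (f y))) (pairStep L f st y) π' := by
  rcases givesBirth_or_givesDeath hy with hb | hd
  · rw [pairStep, if_pos hb]
    exact ⟨π, inv.insert_of_givesBirth hf hy hb⟩
  have hA := fun A => inv.homBelow_iff_eq_facets hf hy (A := A)
  have hne := inv.facets_nonempty_of_givesDeath hf hy hd
  rw [pairStep_of_not_givesBirth (fun hb => hd.2 hb.2) hA]
  refine ⟨_, inv.insert_of_givesDeath hf hy hd (((hA _).2 rfl).1 (maxCellD_spec hne y).1)
    (inv.isShallow_maxCellD_facets hne) fun A hA' hbd => ?_⟩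
  rw [(hA A).1 ⟨hA', homBelow_iff.2 hbd⟩]
  exact (maxCellD_spec hne y).1

end PairingInv

lemma exists_pairingInv_foldl (hf : IsFilter L f) (l : List C) :
    ∀ done : List C, sortedCells L f = done ++ l →
      (∃ π, PairingInv L f done.toFinset (done.foldl (pairStep L f) (∅, ∅)) π) →
      ∃ π, PairingInv L f (done ++ l).toFinset
        ((done ++ l).foldl (pairStep L f) (∅, ∅)) π := by
  induction l with
  | nil => simp
  | cons y rest ih =>
    rintro done hsplit ⟨π, inv⟩
    obtain ⟨hy, hbelow⟩ := below_eq_toFinset_of_sortedCells_eq hf hsplit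
    rw [← hbelow] at inv
    obtain ⟨π', inv'⟩ := inv.exists_pairStep hf hy
    have h := ih (done ++ [y]) (by rw [hsplit, List.append_assoc, List.singleton_append])
      ⟨π', by rwa [List.foldl_append, List.toFinset_append, List.toFinset_cons,
        List.toFinset_nil, insert_empty_eq, Finset.union_singleton, ← hbelow]⟩
    rwa [List.append_assoc, List.singleton_append] at h

lemma exists_pairingInv_pairState (hf : IsFilter L f) :
    ∃ π, PairingInv L f L.cells (pairState L f) π := by
  have h := exists_pairingInv_foldl hf (sortedCells L f) [] rfl ⟨[], pairingInv_empty⟩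
  rwa [List.nil_append, (sortedCells_spec hf).1] at h

end Pairing

theorem omega_is_shallow_order_general (L : LC C) (f : C → ℝ) (hf : IsFilter L f)
    (O : Fin (BD L f).card → C × C)
    (hmem : ∀ i, O i ∈ BD L f)
    (hord : ∀ i j : Fin (BD L f).card, i < j → f (O i).2 < f (O j).2) :
    IsShallowOrder L f O := by
  obtain ⟨π, inv⟩ := exists_pairingInv_pairState hf
  have hsorted : (List.ofFn O).Pairwise (fun p q => f p.2 < f q.2) := List.pairwise_ofFn.2 hord
  have hnodup : (List.ofFn O).Nodup := hsorted.imp fun h hpq => h.ne (by rw [hpq])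
  have hBD : (List.ofFn O).toFinset = BD L f := by
    refine Finset.eq_of_subset_of_card_le (fun p hp => ?_) ?_
    · obtain ⟨i, rfl⟩ := List.mem_ofFn.1 (List.mem_toFinset.1 hp)
      exact hmem i
    · rw [List.toFinset_card_of_nodup hnodup, List.length_ofFn]
  have hπ : List.ofFn O = π :=
    List.eq_of_pairwise_lt_of_toFinset_eq hsorted inv.sorted (by rw [hBD, BD, inv.pairs_eq])
  refine ⟨List.nodup_ofFn.1 hnodup, hmem, fun i => ?_⟩
  have h := inv.shallow i (by simp [← hπ])
  simp only [← hπ, List.getElem_ofFn] at h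
  exact h

/-- The bijection `Ω` ordering the birth-death pairs by
strictly increasing filter value of their death-giving cells is a shallow
order of `f`. -/
theorem omega_is_shallow_order (L : LC C) (f : C → ℝ) (hf : IsFilter L f)
    (O : Fin (BD L f).card → C × C)
    (hinj : Function.Injective O) (hmem : ∀ i, O i ∈ BD L f)
    (hord : ∀ i j : Fin (BD L f).card, i < j → f (O i).2 < f (O j).2) :
    IsShallowOrder L f O :=
  omega_is_shallow_order_general L f hf O hmem hord
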